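/- (Step (ii) of Proposition 2.) Under the stationarity, independence, L²-mixing and time-reversibility assumptions, E[δ(X_τ, X₀, V_τ)·δ(X₀, X_τ, −V₀)] → 0 as τ → ∞. -/

import Mathlib

open Matrix MeasureTheory ProbabilityTheory Filter

/-- The continuous linear map `y ↦ ∑ i, g i * y i`, i.e. the dot product with `g`;
used to say that a function has gradient `g` at a point. -/
noncomputable def dotCLM {d : ℕ} (g : Fin d → ℝ) : (Fin d → ℝ) →L[ℝ] ℝ :=
  ∑ i, g i • ContinuousLinearMap.proj i

/-- `gradEstimator φ gradφ M x y v = (φ(x) - φ(y)) · (∇φ(x)ᵀ M⁻¹ v)`, the unbiased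
estimator `δ` of the derivative of the expected squared jumping distance. -/
noncomputable def gradEstimator {d : ℕ} (φ : (Fin d → ℝ) → ℝ)
    (gradφ : (Fin d → ℝ) → (Fin d → ℝ)) (M : Matrix (Fin d) (Fin d) ℝ)
    (x y v : Fin d → ℝ) : ℝ :=
  (φ x - φ y) * (gradφ x ⬝ᵥ M⁻¹.mulVec v)

/-! The integrand is `(φ(X_τ) - φ(X₀))² s_τ s₀` with `s_t = ∇φ(X_t)ᵀ M⁻¹ V_t`. Expanding the
square writes it as three products `ψ(X_τ, V_τ) ω(X₀, V₀)` of `L²(Π*)` observables, and by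
mixing each expectation tends to `E[ψ] E[ω]`. In every one of these products one factor is
`s` or `φ s`, whose mean vanishes because `V₀` is centered and independent of `X₀`. -/

lemma dotCLM_apply {d : ℕ} (g y : Fin d → ℝ) : dotCLM g y = g ⬝ᵥ y := by
  simp [dotCLM, dotProduct]

lemma gradEstimator_mul_gradEstimator_neg {d : ℕ} (φ : (Fin d → ℝ) → ℝ)
    (gradφ : (Fin d → ℝ) → (Fin d → ℝ)) (M : Matrix (Fin d) (Fin d) ℝ) (x y v w : Fin d → ℝ) :
    gradEstimator φ gradφ M x y v * gradEstimator φ gradφ M y x (-w) =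
      φ x ^ 2 * (gradφ x ⬝ᵥ M⁻¹ *ᵥ v) * (gradφ y ⬝ᵥ M⁻¹ *ᵥ w)
        - 2 * ((φ x * (gradφ x ⬝ᵥ M⁻¹ *ᵥ v)) * (φ y * (gradφ y ⬝ᵥ M⁻¹ *ᵥ w)))
        + (gradφ x ⬝ᵥ M⁻¹ *ᵥ v) * (φ y ^ 2 * (gradφ y ⬝ᵥ M⁻¹ *ᵥ w)) := by
  simp only [gradEstimator, mulVec_neg, dotProduct_neg]
  ring

section Probability

variable {Ω : Type*} [MeasurableSpace Ω] {μ : Measure Ω}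

lemma ProbabilityTheory.IndepFun.integral_dotProduct_eq_zero [IsFiniteMeasure μ]
    {α : Type*} [MeasurableSpace α] {d : ℕ} {X : Ω → α} {V : Ω → Fin d → ℝ}
    (hindep : IndepFun X V μ) (hX : AEMeasurable X μ) (hV : AEMeasurable V μ)
    (hVint : Integrable V μ) (hVcentered : ∫ a, V a ∂μ = 0) (c : α → Fin d → ℝ)
    (hc : Integrable (fun p : α × (Fin d → ℝ) => c p.1 ⬝ᵥ p.2)
      (μ.map fun a => (X a, V a))) :
    ∫ a, c (X a) ⬝ᵥ V a ∂μ = 0 := by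
  have hprod : μ.map (fun a => (X a, V a)) = (μ.map X).prod (μ.map V) :=
    (indepFun_iff_map_prod_eq_prod_map_map hX hV).mp hindep
  have hid : Integrable id (μ.map V) :=
    (integrable_map_measure aestronglyMeasurable_id hV).mpr hVint
  have hmean : ∫ v, v ∂(μ.map V) = 0 :=
    (integral_map hV aestronglyMeasurable_id).trans hVcentered
  have hinner (x : α) : ∫ v, c x ⬝ᵥ v ∂(μ.map V) = 0 := by
    simpa only [dotCLM_apply, id, hmean, dotProduct_zero] using
      (dotCLM (c x)).integral_comp_comm hid
  rw [← integral_map (hX.prodMk hV) hc.1, hprod, integral_prod _ (hprod ▸ hc)]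
  simp only [hinner, integral_zero]

lemma integrable_mul_of_map_eq {β : Type*} [MeasurableSpace β] {Y Y₀ : Ω → β}
    (hY : AEMeasurable Y μ) (hY₀ : AEMeasurable Y₀ μ) (hlaw : μ.map Y = μ.map Y₀)
    ⦃ψ ω : β → ℝ⦄ (hψ : MemLp ψ 2 (μ.map Y₀)) (hω : MemLp ω 2 (μ.map Y₀)) :
    Integrable (fun a => ψ (Y a) * ω (Y₀ a)) μ :=
  ((hlaw ▸ hψ).comp_of_map hY).integrable_mul (hω.comp_of_map hY₀)

end Probability

theorem product_gradEstimators_tendsto_zero_general {d : ℕ}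
    (M : Matrix (Fin d) (Fin d) ℝ)
    (φ : (Fin d → ℝ) → ℝ) (gradφ : (Fin d → ℝ) → (Fin d → ℝ))
    {Ω : Type*} [MeasurableSpace Ω] (μ : Measure Ω) [IsProbabilityMeasure μ]
    (X V : ℝ → Ω → Fin d → ℝ)
    (hXmeas : ∀ τ, Measurable (X τ)) (hVmeas : ∀ τ, Measurable (V τ))
    -- stationarity: the law of (X_τ, V_τ) equals the law Π* of (X₀, V₀)
    (hstat : ∀ τ ≥ (0 : ℝ),
      Measure.map (fun a => (X τ a, V τ a)) μ = Measure.map (fun a => (X 0 a, V 0 a)) μ)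
    -- independence: V₀ is integrable, centered, and independent of X₀
    (hVint : Integrable (V 0) μ) (hVcentered : ∫ a, V 0 a ∂μ = 0)
    (hindep : IndepFun (X 0) (V 0) μ)
    -- L²-mixing
    (hmix : ∀ ψ ω : (Fin d → ℝ) × (Fin d → ℝ) → ℝ,
      MemLp ψ 2 (Measure.map (fun a => (X 0 a, V 0 a)) μ) →
      MemLp ω 2 (Measure.map (fun a => (X 0 a, V 0 a)) μ) →
      Tendsto (fun τ => ∫ a, ψ (X τ a, V τ a) * ω (X 0 a, V 0 a) ∂μ) atTop
        (nhds ((∫ a, ψ (X 0 a, V 0 a) ∂μ) * ∫ a, ω (X 0 a, V 0 a) ∂μ)))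
    (hL2b : MemLp (fun p : (Fin d → ℝ) × (Fin d → ℝ) => gradφ p.1 ⬝ᵥ M⁻¹.mulVec p.2) 2
      (Measure.map (fun a => (X 0 a, V 0 a)) μ))
    (hL2c : MemLp (fun p : (Fin d → ℝ) × (Fin d → ℝ) =>
        φ p.1 * (gradφ p.1 ⬝ᵥ M⁻¹.mulVec p.2)) 2
      (Measure.map (fun a => (X 0 a, V 0 a)) μ))
    (hL2e : MemLp (fun p : (Fin d → ℝ) × (Fin d → ℝ) =>
        φ p.1 ^ 2 * (gradφ p.1 ⬝ᵥ M⁻¹.mulVec p.2)) 2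
      (Measure.map (fun a => (X 0 a, V 0 a)) μ)) :
    Tendsto (fun τ => ∫ a, gradEstimator φ gradφ M (X τ a) (X 0 a) (V τ a) *
        gradEstimator φ gradφ M (X 0 a) (X τ a) (-V 0 a) ∂μ)
      atTop (nhds 0) := by
  have hXV τ : Measurable fun a => (X τ a, V τ a) := (hXmeas τ).prodMk (hVmeas τ)
  have hcentered := hindep.integral_dotProduct_eq_zero (hXmeas 0).aemeasurable
    (hVmeas 0).aemeasurable hVint hVcentered
  have hs0 : ∫ a, gradφ (X 0 a) ⬝ᵥ M⁻¹ *ᵥ V 0 a ∂μ = 0 := by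
    simpa only [dotProduct_mulVec] using hcentered (fun x => gradφ x ᵥ* M⁻¹)
      (by simpa only [dotProduct_mulVec] using hL2b.integrable one_le_two)
  have hφs0 : ∫ a, φ (X 0 a) * (gradφ (X 0 a) ⬝ᵥ M⁻¹ *ᵥ V 0 a) ∂μ = 0 := by
    simpa only [dotProduct_mulVec, smul_dotProduct, smul_eq_mul] using
      hcentered (fun x => φ x • (gradφ x ᵥ* M⁻¹))
        (by simpa only [dotProduct_mulVec, smul_dotProduct, smul_eq_mul] using
          hL2c.integrable one_le_two)
  have hlim := ((hmix _ _ hL2e hL2b).sub ((hmix _ _ hL2c hL2c).const_mul 2)).add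
    (hmix _ _ hL2b hL2e)
  simp only [hs0, hφs0, mul_zero, zero_mul, sub_zero, add_zero] at hlim
  refine hlim.congr' ?_
  filter_upwards [eventually_ge_atTop 0] with τ hτ
  have hint := integrable_mul_of_map_eq (hXV τ).aemeasurable (hXV 0).aemeasurable (hstat τ hτ)
  simp only [gradEstimator_mul_gradEstimator_neg]
  rw [integral_add, integral_sub, integral_const_mul]
  · exact hint hL2e hL2b
  · exact (hint hL2c hL2c).const_mul 2
  · exact (hint hL2e hL2b).sub ((hint hL2c hL2c).const_mul 2)
  · exact hint hL2b hL2e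

/-- Step (ii) of Proposition 2: under stationarity, independence, L²-mixing and
time-reversibility, `E[δ(X_τ, X₀, V_τ) · δ(X₀, X_τ, -V₀)] → 0` as `τ → ∞`. -/
theorem product_gradEstimators_tendsto_zero {d : ℕ}
    (M : Matrix (Fin d) (Fin d) ℝ) (hMsymm : M.IsSymm) (hMpd : M.PosDef)
    (φ : (Fin d → ℝ) → ℝ) (gradφ : (Fin d → ℝ) → (Fin d → ℝ))
    (hφ : ContDiff ℝ 1 φ) (hgradφ : ∀ y, HasFDerivAt φ (dotCLM (gradφ y)) y)
    {Ω : Type*} [MeasurableSpace Ω] (μ : Measure Ω) [IsProbabilityMeasure μ]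
    (X V : ℝ → Ω → Fin d → ℝ)
    (hXmeas : ∀ τ, Measurable (X τ)) (hVmeas : ∀ τ, Measurable (V τ))
    -- stationarity: the law of (X_τ, V_τ) equals the law Π* of (X₀, V₀)
    (hstat : ∀ τ ≥ (0 : ℝ),
      Measure.map (fun a => (X τ a, V τ a)) μ = Measure.map (fun a => (X 0 a, V 0 a)) μ)
    -- independence: V₀ is integrable, centered, and independent of X₀
    (hVint : Integrable (V 0) μ) (hVcentered : ∫ a, V 0 a ∂μ = 0)
    (hindep : IndepFun (X 0) (V 0) μ)
    -- L²-mixing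
    (hmix : ∀ ψ ω : (Fin d → ℝ) × (Fin d → ℝ) → ℝ,
      MemLp ψ 2 (Measure.map (fun a => (X 0 a, V 0 a)) μ) →
      MemLp ω 2 (Measure.map (fun a => (X 0 a, V 0 a)) μ) →
      Tendsto (fun τ => ∫ a, ψ (X τ a, V τ a) * ω (X 0 a, V 0 a) ∂μ) atTop
        (nhds ((∫ a, ψ (X 0 a, V 0 a) ∂μ) * ∫ a, ω (X 0 a, V 0 a) ∂μ)))
    -- square-integrability of the relevant observables under Π*
    (hL2a : MemLp (fun p : (Fin d → ℝ) × (Fin d → ℝ) => φ p.1) 2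
      (Measure.map (fun a => (X 0 a, V 0 a)) μ))
    (hL2b : MemLp (fun p : (Fin d → ℝ) × (Fin d → ℝ) => gradφ p.1 ⬝ᵥ M⁻¹.mulVec p.2) 2
      (Measure.map (fun a => (X 0 a, V 0 a)) μ))
    (hL2c : MemLp (fun p : (Fin d → ℝ) × (Fin d → ℝ) =>
        φ p.1 * (gradφ p.1 ⬝ᵥ M⁻¹.mulVec p.2)) 2
      (Measure.map (fun a => (X 0 a, V 0 a)) μ))
    (hL2d : MemLp (fun p : (Fin d → ℝ) × (Fin d → ℝ) => φ p.1 ^ 2) 2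
      (Measure.map (fun a => (X 0 a, V 0 a)) μ))
    (hL2e : MemLp (fun p : (Fin d → ℝ) × (Fin d → ℝ) =>
        φ p.1 ^ 2 * (gradφ p.1 ⬝ᵥ M⁻¹.mulVec p.2)) 2
      (Measure.map (fun a => (X 0 a, V 0 a)) μ))
    -- time-reversibility: (X_τ, V_τ, X₀, V₀) and (X₀, -V₀, X_τ, -V_τ) have the same law
    (hrev : ∀ τ ≥ (0 : ℝ),
      Measure.map (fun a => (X τ a, V τ a, X 0 a, V 0 a)) μ =
      Measure.map (fun a => (X 0 a, -V 0 a, X τ a, -V τ a)) μ)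
    -- integrability of the product δ(X_τ, X₀, V_τ) · δ(X₀, X_τ, -V₀)
    (hprodint : ∀ τ : ℝ,
      Integrable (fun a => gradEstimator φ gradφ M (X τ a) (X 0 a) (V τ a) *
        gradEstimator φ gradφ M (X 0 a) (X τ a) (-V 0 a)) μ) :
    Tendsto (fun τ => ∫ a, gradEstimator φ gradφ M (X τ a) (X 0 a) (V τ a) *
        gradEstimator φ gradφ M (X 0 a) (X τ a) (-V 0 a) ∂μ)
      atTop (nhds 0) :=
  product_gradEstimators_tendsto_zero_general M φ gradφ μ X V hXmeas hVmeas hstat hVint hVcentered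
    hindep hmix hL2b hL2c hL2e
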